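/- arXiv:1910.13256 — 3 statements merged into one kernel-verified Lean document; each statement's English description precedes it below -/
import Mathlib

section
/- For all s ≥ 1 and each node x_m, the s-th derivative of the nodal polynomial satisfies a^{(s)}(x_m) = s a_m L_m^{(s-1)}(x_m), where a(x) = Π_{k=1}^M (x - x_k) and a_m = Π_{k≠m} (x_m - x_k). -/
/-!
Since the nodes are distinct, `a(x) = a_m (x - x_m) L_m(x)`. By the Leibniz rule, the `s`-th
derivative of `(x - c) g(x)` at `c` keeps only the term in which `x - c` is differentiated once,
namely `s g^{(s-1)}(c)`.
-/

open Finset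

section IteratedDeriv

variable {𝕜 : Type*} [NontriviallyNormedField 𝕜]

theorem iteratedDeriv_sub_const_at_self (n : ℕ) (c : 𝕜) :
    iteratedDeriv n (fun x => x - c) c = if n = 1 then 1 else 0 := by
  rw [iteratedDeriv_comp_sub_const (f := fun x => x)]
  simp only [iteratedDeriv_fun_id, sub_self]
  split_ifs <;> simp_all

theorem iteratedDeriv_sub_const_mul_at_self {n : ℕ} {g : 𝕜 → 𝕜} {c : 𝕜}
    (hg : ContDiffAt 𝕜 n g c) :
    iteratedDeriv n (fun x => (x - c) * g x) c = n * iteratedDeriv (n - 1) g c := by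
  rw [iteratedDeriv_fun_mul (by fun_prop) hg]
  simp only [iteratedDeriv_sub_const_at_self, mul_ite, mul_one, mul_zero, ite_mul, zero_mul,
    sum_ite_eq', mem_range]
  split_ifs with hn
  · simp
  · simp [show n = 0 by omega]

end IteratedDeriv

theorem prod_sub_eq_prod_erase_mul_sub_mul_prod_div {ι F : Type*} [Fintype ι] [DecidableEq ι]
    [Field F] {X : ι → F} (hX : Function.Injective X) (m : ι) (x : F) :
    ∏ k, (x - X k) = (∏ k ∈ univ.erase m, (X m - X k)) *
      ((x - X m) * ∏ k ∈ univ.erase m, (x - X k) / (X m - X k)) := by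
  rw [← mul_prod_erase univ _ (mem_univ m), mul_left_comm, ← prod_mul_distrib]
  congr 1
  refine prod_congr rfl fun k hk => ?_
  have : X m - X k ≠ 0 := sub_ne_zero.2 (hX.ne (ne_of_mem_erase hk).symm)
  field_simp

theorem nodal_poly_higher_deriv_at_node_general {M : ℕ} (X : Fin M → ℝ) (hX : Function.Injective X)
    (L : Fin M → ℝ → ℝ)
    (hL : ∀ m x, L m x = ∏ k ∈ univ.erase m, (x - X k) / (X m - X k))
    (a : ℝ → ℝ) (ha : ∀ x, a x = ∏ k, (x - X k))
    (am : Fin M → ℝ) (ham : ∀ m, am m = ∏ k ∈ univ.erase m, (X m - X k))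
    (m : Fin M) (s : ℕ) :
    iteratedDeriv s a (X m) = s * am m * iteratedDeriv (s - 1) (L m) (X m) := by
  have ha_factor : a = fun x => am m * ((x - X m) * L m x) := by
    funext x
    rw [ha, ham, hL, prod_sub_eq_prod_erase_mul_sub_mul_prod_div hX m]
  have hL_smooth : ContDiff ℝ s (L m) := by
    rw [funext (hL m)]
    fun_prop
  rw [ha_factor, iteratedDeriv_const_mul_field,
    iteratedDeriv_sub_const_mul_at_self hL_smooth.contDiffAt]
  ring

theorem nodal_poly_higher_deriv_at_node {M : ℕ} (X : Fin M → ℝ) (hX : Function.Injective X)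
    (L : Fin M → ℝ → ℝ)
    (hL : ∀ m x, L m x = ∏ k ∈ univ.erase m, (x - X k) / (X m - X k))
    (a : ℝ → ℝ) (ha : ∀ x, a x = ∏ k, (x - X k))
    (am : Fin M → ℝ) (ham : ∀ m, am m = ∏ k ∈ univ.erase m, (X m - X k))
    (m : Fin M) (s : ℕ) (hs : 1 ≤ s) :
    iteratedDeriv s a (X m) = s * am m * iteratedDeriv (s - 1) (L m) (X m) :=
  nodal_poly_higher_deriv_at_node_general X hX L hL a ha am ham m s
end

section
/- Recursion for higher derivatives of Lagrange basis polynomials: for s ≥ 1 and i ≠ m, L_m^{(s)}(x_i) = (s/(x_i - x_m)) [ (a_i/a_m) L_i^{(s-1)}(x_i) - L_m^{(s-1)}(x_i) ], where a_j = Π_{k≠j} (x_j - x_k). -/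
/-!
Both `(x - x_m) L_m(x)` and `(x - x_i) L_i(x)` equal `ω(x) / a_j` with `ω(x) = ∏_k (x - x_k)`,
so `(x - x_m) L_m = (a_i / a_m) (x - x_i) L_i`. Differentiate this identity `s` times: by Leibniz,
since `x - c` has vanishing second derivative,
`((x - c) f)^(s) = (x - c) f^(s) + s f^(s-1)`, and at `x = x_i` the right-hand side loses
its first term.
-/

open Finset

theorem iteratedDeriv_succ_sub_mul {𝕜 : Type*} [NontriviallyNormedField 𝕜] {f : 𝕜 → 𝕜}
    {n : ℕ} {x : 𝕜} (c : 𝕜) (hf : ContDiffAt 𝕜 (n + 1) f x) :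
    iteratedDeriv (n + 1) (fun y => (y - c) * f y) x
      = (x - c) * iteratedDeriv (n + 1) f x + (n + 1) * iteratedDeriv n f x := by
  have hlin (k : ℕ) : iteratedDeriv k (fun y => y - c) x
      = if k = 0 then x - c else if k = 1 then 1 else 0 := by
    simpa [iteratedDeriv_id] using congrFun (iteratedDeriv_comp_sub_const k id c) x
  rw [iteratedDeriv_fun_mul (by fun_prop) hf, sum_range_succ', sum_range_succ']
  simp only [hlin, Nat.add_eq_zero_iff, one_ne_zero, and_false, ↓reduceIte, Nat.add_eq_right,
    mul_zero, zero_mul, sum_const_zero, zero_add, Nat.choose_one_right, Nat.choose_zero_right,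
    Nat.cast_add, Nat.cast_one, mul_one, one_mul, add_tsub_cancel_right, tsub_zero]
  ring

theorem sub_mul_prod_erase_div_sub {K ι : Type*} [Field K] [Fintype ι] [DecidableEq ι]
    (X : ι → K) (j : ι) (x : K) :
    (x - X j) * ∏ k ∈ univ.erase j, (x - X k) / (X j - X k)
      = (∏ k, (x - X k)) / ∏ k ∈ univ.erase j, (X j - X k) := by
  rw [prod_div_distrib, ← mul_div_assoc, mul_prod_erase univ (fun k => x - X k) (mem_univ j)]

theorem prod_erase_sub_ne_zero {K ι : Type*} [Field K] [Fintype ι] [DecidableEq ι]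
    {X : ι → K} (hX : Function.Injective X) (j : ι) :
    ∏ k ∈ univ.erase j, (X j - X k) ≠ 0 :=
  prod_ne_zero_iff.mpr fun _ hk => sub_ne_zero.mpr <| hX.ne (ne_of_mem_erase hk).symm

theorem lagrange_higher_deriv_recursion {M : ℕ} (X : Fin M → ℝ) (hX : Function.Injective X)
    (L : Fin M → ℝ → ℝ)
    (hL : ∀ m x, L m x = ∏ k ∈ univ.erase m, (x - X k) / (X m - X k))
    (a : Fin M → ℝ) (ha : ∀ j, a j = ∏ k ∈ univ.erase j, (X j - X k))
    (s : ℕ) (hs : 1 ≤ s) (i m : Fin M) (him : i ≠ m) :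
    iteratedDeriv s (L m) (X i)
      = s / (X i - X m)
        * ((a i / a m) * iteratedDeriv (s - 1) (L i) (X i)
            - iteratedDeriv (s - 1) (L m) (X i)) := by
  obtain ⟨t, rfl⟩ := Nat.exists_eq_add_of_le' hs
  have hsmooth (j : Fin M) : ContDiff ℝ (t + 1) (L j) := by
    rw [funext (hL j)]
    exact contDiff_prod fun k _ => (contDiff_id.sub contDiff_const).div_const _
  have hcross : (fun x => (x - X m) * L m x) = fun x => a i / a m * ((x - X i) * L i x) := by
    funext x
    have hai := prod_erase_sub_ne_zero hX i
    have ham := prod_erase_sub_ne_zero hX m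
    rw [hL, hL, sub_mul_prod_erase_div_sub, sub_mul_prod_erase_div_sub, ha, ha]
    field_simp
  have hderiv := congrArg (iteratedDeriv (t + 1) · (X i)) hcross
  simp only [iteratedDeriv_const_mul_field] at hderiv
  rw [iteratedDeriv_succ_sub_mul _ (hsmooth m).contDiffAt,
    iteratedDeriv_succ_sub_mul _ (hsmooth i).contDiffAt, sub_self, zero_mul, zero_add] at hderiv
  have hne : X i - X m ≠ 0 := sub_ne_zero.mpr (hX.ne him)
  rw [Nat.add_sub_cancel]
  field_simp
  push_cast
  linear_combination hderiv
end

section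
/- The s-th power of the first differentiation matrix agrees with the s-th differentiation matrix when applied to values of any polynomial of degree at most M-1: for p of degree ≤ M-1, (D_1^s f)_i = p^{(s)}(x_i) where f_j = p(x_j); in particular D_1^M applied to such vectors is zero when s = M. -/
/-!
`D₁` maps the nodal values of a polynomial `q` of degree `< M` to the nodal values of the
derivative of its Lagrange interpolant, which is `q` itself. Since `q'` again has degree `< M`,
this iterates: `D₁ ^ s` maps the values of `q` to those of `q⁽ˢ⁾`, which vanishes for `s = M`.
-/

open Finset
open scoped Matrix

theorem Polynomial.iteratedDeriv_eval {𝕜 : Type*} [NontriviallyNormedField 𝕜] (n : ℕ)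
    (q : Polynomial 𝕜) :
    iteratedDeriv n (fun x => q.eval x) = fun x => (derivative^[n] q).eval x := by
  induction n generalizing q with
  | zero => rfl
  | succ n ih =>
    have hderiv : deriv (fun x => q.eval x) = fun x => q.derivative.eval x :=
      _root_.funext fun _ => q.deriv
    rw [iteratedDeriv_succ', hderiv, ih, Function.iterate_succ_apply]

namespace Lagrange

open Polynomial

variable {F ι : Type*} [Field F] [DecidableEq ι]

theorem eval_basis (s : Finset ι) (v : ι → F) (i : ι) (x : F) :
    (Lagrange.basis s v i).eval x = ∏ j ∈ s.erase i, (x - v j) / (v i - v j) := by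
  rw [Lagrange.basis, eval_prod]
  refine prod_congr rfl fun j _ => ?_
  simp [basisDivisor, div_eq_inv_mul]

variable [Fintype ι]

noncomputable def diffMatrix (v : ι → F) : Matrix ι ι F :=
  Matrix.of fun i j => (derivative (Lagrange.basis univ v j)).eval (v i)

theorem diffMatrix_mulVec_eval {v : ι → F} (hv : Function.Injective v) {q : F[X]}
    (hq : q.degree < Fintype.card ι) :
    diffMatrix v *ᵥ (fun j => q.eval (v j)) = fun i => (derivative q).eval (v i) := by
  funext i
  conv_rhs => rw [eq_interpolate hv.injOn hq]
  simp only [interpolate_apply, map_sum, derivative_C_mul, eval_finsetSum, eval_mul, eval_C]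
  exact sum_congr rfl fun j _ => mul_comm _ _

theorem diffMatrix_pow_mulVec_eval {v : ι → F} (hv : Function.Injective v) (n : ℕ) {q : F[X]}
    (hq : q.degree < Fintype.card ι) :
    diffMatrix v ^ n *ᵥ (fun j => q.eval (v j)) = fun i => (derivative^[n] q).eval (v i) := by
  induction n generalizing q with
  | zero => simp
  | succ n ih =>
    rw [pow_succ, ← Matrix.mulVec_mulVec, diffMatrix_mulVec_eval hv hq,
      ih ((degree_derivative_le).trans_lt hq), Function.iterate_succ_apply]

end Lagrange

theorem diff_matrix_powers {M : ℕ} (X : Fin M → ℝ) (hX : Function.Injective X)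
    (L : Fin M → ℝ → ℝ)
    (hL : ∀ m x, L m x = ∏ k ∈ univ.erase m, (x - X k) / (X m - X k))
    (D₁ : Matrix (Fin M) (Fin M) ℝ)
    (hD₁ : ∀ i m, D₁ i m = deriv (L m) (X i))
    (p : Polynomial ℝ) (hp : p.degree ≤ (M - 1 : ℕ)) :
    (∀ s : ℕ, ∀ i : Fin M,
        (D₁ ^ s).mulVec (fun j => p.eval (X j)) i
          = iteratedDeriv s (fun x => p.eval x) (X i))
      ∧ (D₁ ^ M).mulVec (fun j => p.eval (X j)) = 0 := by
  have hD : D₁ = Lagrange.diffMatrix X := by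
    ext i m
    have hLm : L m = fun x => (Lagrange.basis univ X m).eval x :=
      funext fun x => by rw [hL, Lagrange.eval_basis]
    rw [hD₁, hLm, Polynomial.deriv, Lagrange.diffMatrix, Matrix.of_apply]
  have hM : ∀ _ : Fin M, M - 1 < M := fun i => Nat.sub_lt i.pos one_pos
  have hpows : ∀ s i,
      (D₁ ^ s *ᵥ fun j => p.eval (X j)) i = (Polynomial.derivative^[s] p).eval (X i) := by
    intro s i
    have hdeg : p.degree < Fintype.card (Fin M) := by
      rw [Fintype.card_fin]; exact hp.trans_lt (by exact_mod_cast hM i)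
    rw [hD, Lagrange.diffMatrix_pow_mulVec_eval hX s hdeg]
  refine ⟨fun s i => by rw [hpows, Polynomial.iteratedDeriv_eval], funext fun i => ?_⟩
  have hnat : p.natDegree < M := (Polynomial.natDegree_le_iff_degree_le.mpr hp).trans_lt (hM i)
  rw [hpows, Polynomial.iterate_derivative_eq_zero hnat, Polynomial.eval_zero, Pi.zero_apply]
end
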